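/- arXiv:1210.4639 — 5 statements merged into one kernel-verified Lean document; each statement's English description precedes it below -/
import Mathlib

section
/- Let r ≥ 0, t, k be integers with t > r + 1 and k ≥ r, and set Ω = Ω(t,r), a = a(t,r), b = b(t,r). Then, as integers, t·C(k+2−(r+1), 2) − b·C(k+2−Ω, 2) − a·C(k+2−(Ω+1), 2) = C(k+2, 2) − C(r+2, 2) − Σ_{j=1}^{k−r} max(r + j + 1 − j·t, 0). -/
/-- `Ω t r = ⌊t·r/(t-1)⌋ + 1`, the floor taken in `ℚ`. -/
noncomputable def Omega (t r : ℤ) : ℤ := ⌊(t * r : ℚ) / ((t : ℚ) - 1)⌋ + 1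

/-- `a t r = t·(r+1) + (1−t)·Ω(t,r)`. -/
noncomputable def aa (t r : ℤ) : ℤ := t * (r + 1) + (1 - t) * Omega t r

/-- `b t r = t − 1 − a(t,r)`. -/
noncomputable def bb (t r : ℤ) : ℤ := t - 1 - aa t r

/-- `C2 m = C(m, 2)`, with the convention that it is `0` for `m < 2`
(truncation via `Int.toNat`). -/
def C2 (m : ℤ) : ℤ := ((m.toNat).choose 2 : ℤ)

lemma nat_choose_two (n : ℕ) : 2 * n.choose 2 = n * (n - 1) := by
  induction n with
  | zero => simp
  | succ m ih =>
    rw [Nat.choose_succ_succ]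
    cases m with
    | zero => simp
    | succ p =>
      simp only [Nat.succ_sub_one] at *
      rw [Nat.mul_add, ih, Nat.choose_one_right]
      ring

lemma C2_eq (m : ℤ) (hm : 0 ≤ m) : 2 * C2 m = m * (m - 1) := by
  unfold C2
  rcases eq_or_lt_of_le hm with h | h
  · simp [← h]
  · have h1 : (1 : ℤ) ≤ m := h
    have : (m.toNat : ℤ) = m := Int.toNat_of_nonneg hm
    have h2 : 1 ≤ m.toNat := by omega
    have h3 := nat_choose_two m.toNat
    zify [h2] at h3
    rw [Int.toNat_of_nonneg hm] at h3
    linarith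

lemma Omega_eq (t r : ℤ) (hr : 0 ≤ r) (ht : t > r + 1) : Omega t r = r + 1 := by
  unfold Omega
  have h1 : (0 : ℚ) < (t : ℚ) - 1 := by
    have : (1 : ℤ) < t := by omega
    exact_mod_cast sub_pos.mpr (by exact_mod_cast this)
  have hfloor : ⌊(t * r : ℚ) / ((t : ℚ) - 1)⌋ = r := by
    rw [Int.floor_eq_iff]
    constructor
    · rw [le_div_iff₀ h1]
      have hr' : (0 : ℚ) ≤ (r : ℚ) := by exact_mod_cast hr
      push_cast
      nlinarith
    · rw [div_lt_iff₀ h1]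
      have htr : ((r : ℚ) + 1) < (t : ℚ) := by exact_mod_cast ht
      have hr' : (0 : ℚ) ≤ (r : ℚ) := by exact_mod_cast hr
      push_cast
      nlinarith
  omega

theorem stmt_4 (r t k : ℤ) (hr : 0 ≤ r) (ht : t > r + 1) (hk : k ≥ r) :
    t * C2 (k + 2 - (r + 1)) - bb t r * C2 (k + 2 - Omega t r)
      - aa t r * C2 (k + 2 - (Omega t r + 1))
    = C2 (k + 2) - C2 (r + 2)
      - ∑ j ∈ Finset.Icc (1 : ℤ) (k - r), max (r + j + 1 - j * t) 0 := by
  have hΩ : Omega t r = r + 1 := Omega_eq t r hr ht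
  have ha : aa t r = r + 1 := by unfold aa; rw [hΩ]; ring
  have hb : bb t r = t - r - 2 := by unfold bb; rw [ha]; ring
  have hsum : ∑ j ∈ Finset.Icc (1 : ℤ) (k - r), max (r + j + 1 - j * t) 0 = 0 := by
    apply Finset.sum_eq_zero
    intro j hj
    simp only [Finset.mem_Icc] at hj
    have : r + j + 1 - j * t ≤ 0 := by nlinarith [hj.1, hj.2]
    simp [max_eq_right this]
  rw [hΩ, ha, hb, hsum]
  have h1 : 2 * C2 (k + 2 - (r + 1)) = (k + 2 - (r + 1)) * (k + 1 - (r + 1)) :=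
    by rw [C2_eq _ (by omega)]; ring
  have h2 : 2 * C2 (k + 2 - (r + 1 + 1)) = (k + 2 - (r + 2)) * (k + 1 - (r + 2)) :=
    by rw [C2_eq _ (by omega)]; ring
  have h3 : 2 * C2 (k + 2) = (k + 2) * (k + 1) := by rw [C2_eq _ (by omega)]; ring
  have h4 : 2 * C2 (r + 2) = (r + 2) * (r + 1) := by rw [C2_eq _ (by omega)]; ring
  nlinarith [h1, h2, h3, h4]
end

section
/- Let r ≥ 0, t, k be integers with 2 ≤ t ≤ r + 1 and k ≥ r, and set Ω = Ω(t,r), a = a(t,r), b = b(t,r). Then, as integers, t·C(k+2−(r+1), 2) − b·C(k+2−Ω, 2) − a·C(k+2−(Ω+1), 2) = C(k+2, 2) − C(r+2, 2) − Σ_{j=1}^{k−r} max(r + j + 1 − j·t, 0). -/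
/-!
Write `r = (t-1)q + s` with `0 ≤ s < t-1`; then `Ω = r + q + 1`, `a = s + 1` and `b = t - 2 - s`.
Both sides vanish at `k = r`, and as `k` grows by one, each `C(m,2)` grows by `max m 0`.
The `j`-th summand `max (r + 1 - j(t-1)) 0` is positive exactly for `j ≤ q`, and in either
regime the increments of the two sides agree by a linear identity, so the theorem follows by
induction on `k - r`.
-/

lemma C2_succ (m : ℤ) : C2 (m + 1) = C2 m + max m 0 := by
  unfold C2
  rcases le_or_gt m 0 with h | h
  · have hm : m.toNat = 0 := by omega
    have hm1 : (m + 1).toNat = 0 ∨ (m + 1).toNat = 1 := by omega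
    rw [max_eq_right h]
    rcases hm1 with hm1 | hm1 <;> simp [hm, hm1]
  · have hm1 : (m + 1).toNat = m.toNat + 1 := by omega
    rw [hm1, max_eq_left h.le, Nat.choose_succ_succ, Nat.choose_one_right]
    push_cast
    omega

lemma C2_eq_zero {m : ℤ} (h : m ≤ 1) : C2 m = 0 := by
  unfold C2
  rcases (show m.toNat = 0 ∨ m.toNat = 1 by omega) with hm | hm <;> simp [hm]

lemma Omega_eq_add_ediv {t : ℤ} (ht : 1 < t) (r : ℤ) : Omega t r = r + r / (t - 1) + 1 := by
  obtain ⟨d, rfl⟩ : ∃ d : ℕ, t = d + 1 := ⟨(t - 1).toNat, by omega⟩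
  have hd : (d : ℤ) ≠ 0 := by omega
  have hcast : ((((d : ℤ) + 1 : ℤ) : ℚ) * r) / ((((d : ℤ) + 1 : ℤ) : ℚ) - 1)
      = ((r + d * r : ℤ) : ℚ) / (d : ℚ) := by
    push_cast; ring_nf
  rw [Omega, hcast, Rat.floor_intCast_div_natCast, Int.add_mul_ediv_left r r hd]
  ring_nf

lemma aa_eq_emod_add_one {t : ℤ} (ht : 1 < t) (r : ℤ) : aa t r = r % (t - 1) + 1 := by
  have hdiv := Int.mul_ediv_add_emod r (t - 1)
  rw [aa, Omega_eq_add_ediv ht]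
  linear_combination -hdiv

lemma bb_eq_sub_emod {t : ℤ} (ht : 1 < t) (r : ℤ) : bb t r = t - 2 - r % (t - 1) := by
  rw [bb, aa_eq_emod_add_one ht]
  ring

section DivisionWithRemainder

variable {t q s r : ℤ} (hs0 : 0 ≤ s) (hst : s < t - 1) (hr : r = (t - 1) * q + s)
include hs0 hst hr

lemma max_summand_eq (n : ℤ) :
    max (r + (n + 1) + 1 - (n + 1) * t) 0
      = r + n + 2 - t * (n + 1) + (t - 2 - s) * max (n + 1 - q) 0 + (s + 1) * max (n - q) 0 := by
  rcases lt_or_ge n q with hnq | hnq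
  · have : (n + 1) * (t - 1) ≤ q * (t - 1) := mul_le_mul_of_nonneg_right (by omega) (by omega)
    rw [max_eq_left (by nlinarith), max_eq_right (by omega), max_eq_right (by omega)]
    ring
  · have : (q + 1) * (t - 1) ≤ (n + 1) * (t - 1) :=
      mul_le_mul_of_nonneg_right (by omega) (by omega)
    rw [max_eq_right (by nlinarith), max_eq_left (by omega), max_eq_left (by omega)]
    linear_combination -hr

lemma C2_combination_eq (hq : 0 ≤ q) {n : ℤ} (hn : 0 ≤ n) :
    t * C2 (n + 1) - (t - 2 - s) * C2 (n + 1 - q) - (s + 1) * C2 (n - q)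
      = C2 (r + n + 2) - C2 (r + 2)
        - ∑ j ∈ Finset.Icc (1 : ℤ) n, max (r + j + 1 - j * t) 0 := by
  have hr0 : 0 ≤ r := by nlinarith
  induction n, hn using Int.leInduction with
  | base =>
    rw [C2_eq_zero (by omega), C2_eq_zero (by omega), C2_eq_zero (by omega), add_zero]
    simp
  | succ n hn ih =>
    have hIcc : Finset.Icc (1 : ℤ) (n + 1) = insert (n + 1) (Finset.Icc 1 n) := by
      ext x; simp only [Finset.mem_Icc, Finset.mem_insert]; omega
    rw [hIcc, Finset.sum_insert (by simp), max_summand_eq hs0 hst hr,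
      show n + 1 + 1 - q = n + 1 - q + 1 by ring, show r + (n + 1) + 2 = r + n + 2 + 1 by ring,
      show n + 1 - q = n - q + 1 by ring, C2_succ (n + 1), C2_succ (n - q + 1), C2_succ (n - q),
      C2_succ (r + n + 2), max_eq_left (show 0 ≤ n + 1 by omega),
      max_eq_left (show 0 ≤ r + n + 2 by omega)]
    rw [show n + 1 - q = n - q + 1 by ring, C2_succ (n - q)] at ih
    linear_combination ih

end DivisionWithRemainder

theorem stmt_5_general (r t k : ℤ) (hr : 0 ≤ r) (ht2 : 2 ≤ t) (hk : k ≥ r) :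
    t * C2 (k + 2 - (r + 1)) - bb t r * C2 (k + 2 - Omega t r)
      - aa t r * C2 (k + 2 - (Omega t r + 1))
    = C2 (k + 2) - C2 (r + 2)
      - ∑ j ∈ Finset.Icc (1 : ℤ) (k - r), max (r + j + 1 - j * t) 0 := by
  have ht1 : 1 < t := by omega
  have key := C2_combination_eq (Int.emod_nonneg r (by omega)) (Int.emod_lt_of_pos r (by omega))
    (Int.mul_ediv_add_emod r (t - 1)).symm (Int.ediv_nonneg hr (by omega)) (sub_nonneg.2 hk)
  rw [Omega_eq_add_ediv ht1, aa_eq_emod_add_one ht1, bb_eq_sub_emod ht1]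
  rwa [show k + 2 - (r + 1) = k - r + 1 by ring,
    show k + 2 - (r + r / (t - 1) + 1) = k - r + 1 - r / (t - 1) by ring,
    show k + 2 - (r + r / (t - 1) + 1 + 1) = k - r - r / (t - 1) by ring,
    show k + 2 = r + (k - r) + 2 by ring]

theorem stmt_5 (r t k : ℤ) (hr : 0 ≤ r) (ht2 : 2 ≤ t) (htr : t ≤ r + 1) (hk : k ≥ r) :
    t * C2 (k + 2 - (r + 1)) - bb t r * C2 (k + 2 - Omega t r)
      - aa t r * C2 (k + 2 - (Omega t r + 1))
    = C2 (k + 2) - C2 (r + 2)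
      - ∑ j ∈ Finset.Icc (1 : ℤ) (k - r), max (r + j + 1 - j * t) 0 :=
  stmt_5_general r t k hr ht2 hk
end

section
/- Let r ≥ 0, t, k be integers with t ≥ r + 2 and k ≥ r, and set Ω = Ω(t,r), a = a(t,r), b = b(t,r). Then t·C(k+2−(r+1), 2) − b·C(k+2−Ω, 2) − a·C(k+2−(Ω+1), 2) = C(k+2, 2) − C(r+2, 2); in particular this expression does not depend on t for t ≥ r + 2. -/
/-!
For `0 ≤ r ≤ t - 2` we have `r ≤ t·r/(t-1) = r + r/(t-1) < r + 1`, so `Ω = r + 1`, `a = r + 1` and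
`b = t - r - 2`. The `t`-dependence then cancels, `t - b = r + 2`, and what is left is the identity
`s·C(m+1, 2) - (s-1)·C(m, 2) = C(m+s, 2) - C(s, 2)` with `s = r + 2`, `m = k - r`, which is a polynomial
identity once `C(n, 2) = n(n-1)/2` is available for `n ≥ 0`.
-/

lemma two_mul_C2 {n : ℤ} (hn : 0 ≤ n) : 2 * C2 n = n * (n - 1) := by
  lift n to ℕ using hn
  have h : ((n.choose 2 : ℕ) : ℚ) = n * (n - 1) / 2 := Nat.cast_choose_two ℚ n
  rw [C2, Int.toNat_natCast]
  qify
  rw [h]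
  ring

lemma mul_C2_succ_sub_mul_C2 {s m : ℤ} (hs : 0 ≤ s) (hm : 0 ≤ m) :
    s * C2 (m + 1) - (s - 1) * C2 m = C2 (m + s) - C2 s := by
  refine mul_left_cancel₀ (two_ne_zero (α := ℤ)) ?_
  have h₁ := two_mul_C2 (n := m + 1) (by omega)
  have h₂ := two_mul_C2 hm
  have h₃ := two_mul_C2 (n := m + s) (by omega)
  have h₄ := two_mul_C2 hs
  linear_combination s * h₁ - (s - 1) * h₂ - h₃ + h₄

lemma Omega_of_le {t r : ℤ} (hr : 0 ≤ r) (ht : r + 2 ≤ t) : Omega t r = r + 1 := by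
  have hr' : (0 : ℚ) ≤ r := by exact_mod_cast hr
  have ht' : (r : ℚ) + 2 ≤ t := by exact_mod_cast ht
  have hpos : (0 : ℚ) < t - 1 := by linarith
  rw [Omega, add_left_inj, Int.floor_eq_iff, le_div_iff₀ hpos, div_lt_iff₀ hpos]
  constructor <;> nlinarith

lemma aa_of_le {t r : ℤ} (hr : 0 ≤ r) (ht : r + 2 ≤ t) : aa t r = r + 1 := by
  rw [aa, Omega_of_le hr ht]
  ring

lemma bb_of_le {t r : ℤ} (hr : 0 ≤ r) (ht : r + 2 ≤ t) : bb t r = t - r - 2 := by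
  rw [bb, aa_of_le hr ht]
  ring

theorem stmt_7 (r t k : ℤ) (hr : 0 ≤ r) (ht : t ≥ r + 2) (hk : k ≥ r) :
    t * C2 (k + 2 - (r + 1)) - bb t r * C2 (k + 2 - Omega t r)
      - aa t r * C2 (k + 2 - (Omega t r + 1))
    = C2 (k + 2) - C2 (r + 2) := by
  rw [Omega_of_le hr ht, aa_of_le hr ht, bb_of_le hr ht,
    show k + 2 - (r + 1) = k - r + 1 by ring, show k + 2 - (r + 1 + 1) = k - r by ring,
    show k + 2 = k - r + (r + 2) by ring]
  linear_combination mul_C2_succ_sub_mul_C2 (s := r + 2) (m := k - r) (by omega) (by omega)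
end

section
/- Let r ≥ 1 be an integer. Let ℓ1, ℓ2, ℓ3 be linear forms in R = ℝ[x,y,z] that are pairwise linearly independent and all vanish at some common point p ∈ ℝ³, and let L be a linear form in R with L(p) ≠ 0. Then for every integer d ≥ r + 1 and every homogeneous polynomial g ∈ R of degree d, there exist homogeneous polynomials u, v ∈ R of degree d and a homogeneous polynomial w ∈ R of degree r − 1 (each possibly zero) such that ℓ3^{r+1}·g = ℓ1^{r+1}·u + ℓ2^{r+1}·v + L^{d−r+1}·ℓ3^{r+1}·w. -/
open MvPolynomial Finset

lemma deg1_decomp (ℓ : MvPolynomial (Fin 3) ℝ) (h : ℓ.IsHomogeneous 1) :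
    ℓ = ∑ i : Fin 3, C (coeff (Finsupp.single i 1) ℓ) * X i := by
  ext m
  rw [MvPolynomial.coeff_sum]
  simp only [coeff_C_mul, coeff_X']
  by_cases hm : ∃ i, Finsupp.single i 1 = m
  · obtain ⟨i, rfl⟩ := hm
    rw [Finset.sum_eq_single i]
    · simp
    · intro j _ hj
      rw [if_neg, mul_zero]
      simpa [Finsupp.single_left_inj (one_ne_zero (α := ℕ))] using hj
    · simp
  · have hz : coeff m ℓ = 0 := by
      by_contra hc
      have hdeg : m.degree = 1 := by
        have := h hc
        rwa [Finsupp.degree_eq_weight_one]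
      have hsum : m 0 + m 1 + m 2 = 1 := by
        have : m.degree = ∑ i : Fin 3, m i := by
          rw [Finsupp.degree]
          exact Finset.sum_subset (Finset.subset_univ _)
            (fun i _ hi => Finsupp.notMem_support_iff.mp hi)
        rw [this, Fin.sum_univ_three] at hdeg
        exact hdeg
      apply hm
      rcases Nat.eq_zero_or_pos (m 0) with h0 | h0
      · rcases Nat.eq_zero_or_pos (m 1) with h1 | h1
        · exact ⟨2, by ext j; fin_cases j <;> simp [Finsupp.single_apply] <;> omega⟩
        · exact ⟨1, by ext j; fin_cases j <;> simp [Finsupp.single_apply] <;> omega⟩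
      · exact ⟨0, by ext j; fin_cases j <;> simp [Finsupp.single_apply] <;> omega⟩
    rw [hz]
    rw [Finset.sum_eq_zero]
    intro j _
    rw [if_neg, mul_zero]
    exact fun hj => hm ⟨j, hj⟩

noncomputable def Mlin : (Fin 3 → ℝ) →ₗ[ℝ] MvPolynomial (Fin 3) ℝ where
  toFun v := ∑ i, v i • X i
  map_add' u v := by simp [add_smul, Finset.sum_add_distrib]
  map_smul' c v := by simp [smul_smul, Finset.smul_sum]

noncomputable def Phi (p : Fin 3 → ℝ) : (Fin 3 → ℝ) →ₗ[ℝ] ℝ where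
  toFun v := ∑ i, v i * p i
  map_add' u v := by simp [add_mul, Finset.sum_add_distrib]
  map_smul' c v := by simp [mul_assoc, Finset.mul_sum]

lemma Mlin_vec (ℓ : MvPolynomial (Fin 3) ℝ) (h : ℓ.IsHomogeneous 1) :
    Mlin (fun i => coeff (Finsupp.single i 1) ℓ) = ℓ := by
  conv_rhs => rw [deg1_decomp ℓ h]
  simp [Mlin, smul_eq_C_mul]

lemma Phi_vec (p : Fin 3 → ℝ) (ℓ : MvPolynomial (Fin 3) ℝ) (h : ℓ.IsHomogeneous 1) :
    Phi p (fun i => coeff (Finsupp.single i 1) ℓ) = eval p ℓ := by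
  conv_rhs => rw [deg1_decomp ℓ h]
  simp [Phi]

lemma linalg (ℓ1 ℓ2 L : MvPolynomial (Fin 3) ℝ)
    (h1 : ℓ1.IsHomogeneous 1) (h2 : ℓ2.IsHomogeneous 1) (hL : L.IsHomogeneous 1)
    (h12 : LinearIndependent ℝ ![ℓ1, ℓ2])
    (p : Fin 3 → ℝ)
    (hp1 : eval p ℓ1 = 0) (hp2 : eval p ℓ2 = 0) (hpL : eval p L ≠ 0) :
    (∀ q : MvPolynomial (Fin 3) ℝ, q.IsHomogeneous 1 → eval p q = 0 →
       ∃ a b : ℝ, q = a • ℓ1 + b • ℓ2) ∧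
    (∀ i : Fin 3, ∃ a b c : ℝ, X i = a • L + b • ℓ1 + c • ℓ2) := by
  set v1 : Fin 3 → ℝ := fun i => coeff (Finsupp.single i 1) ℓ1 with hv1
  set v2 : Fin 3 → ℝ := fun i => coeff (Finsupp.single i 1) ℓ2 with hv2
  set vL : Fin 3 → ℝ := fun i => coeff (Finsupp.single i 1) L with hvL
  have hM1 : Mlin v1 = ℓ1 := Mlin_vec _ h1
  have hM2 : Mlin v2 = ℓ2 := Mlin_vec _ h2
  have hML : Mlin vL = L := Mlin_vec _ hL
  have hP1 : Phi p v1 = 0 := by rw [Phi_vec p _ h1, hp1]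
  have hP2 : Phi p v2 = 0 := by rw [Phi_vec p _ h2, hp2]
  have hPL : Phi p vL ≠ 0 := by rw [Phi_vec p _ hL]; exact hpL
  have h12' : ∀ a b : ℝ, a • ℓ1 + b • ℓ2 = 0 → a = 0 ∧ b = 0 := by
    intro a b hab
    have := Fintype.linearIndependent_iff.mp h12 ![a, b]
      (by simpa [Fin.sum_univ_two] using hab)
    exact ⟨this 0, this 1⟩
  have hli : LinearIndependent ℝ ![v1, v2, vL] := by
    rw [Fintype.linearIndependent_iff]
    intro g hg
    have hg' : g 0 • v1 + g 1 • v2 + g 2 • vL = 0 := by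
      simpa [Fin.sum_univ_three] using hg
    have hg2 : g 2 = 0 := by
      have := congrArg (Phi p) hg'
      simp [map_add, map_smul, hP1, hP2] at this
      rcases this with h | h
      · exact h
      · exact absurd h hPL
    rw [hg2, zero_smul, add_zero] at hg'
    have := congrArg Mlin hg'
    simp only [map_add, map_smul, hM1, hM2, map_zero] at this
    have := h12' _ _ this
    intro i
    fin_cases i
    · exact this.1
    · exact this.2
    · exact hg2
  have hspan : Submodule.span ℝ (Set.range ![v1, v2, vL]) = ⊤ :=
    hli.span_eq_top_of_card_eq_finrank (by simp [Module.finrank_pi])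
  have key : ∀ v : Fin 3 → ℝ, ∃ a b c : ℝ, v = a • v1 + b • v2 + c • vL := by
    intro v
    have hv : v ∈ Submodule.span ℝ (Set.range ![v1, v2, vL]) := by
      rw [hspan]; trivial
    obtain ⟨cfun, hcfun⟩ := (Submodule.mem_span_range_iff_exists_fun ℝ).mp hv
    refine ⟨cfun 0, cfun 1, cfun 2, ?_⟩
    rw [← hcfun, Fin.sum_univ_three]
    simp
  constructor
  · intro q hq hpq
    set vq : Fin 3 → ℝ := fun i => coeff (Finsupp.single i 1) q with hvq
    obtain ⟨a, b, c, habc⟩ := key vq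
    have hc : c = 0 := by
      have := congrArg (Phi p) habc
      rw [Phi_vec p _ hq, hpq] at this
      simp [map_add, map_smul, hP1, hP2] at this
      rcases this with h | h
      · exact h
      · exact absurd h hPL
    rw [hc, zero_smul, add_zero] at habc
    have := congrArg Mlin habc
    rw [Mlin_vec _ hq] at this
    simp only [map_add, map_smul, hM1, hM2] at this
    exact ⟨a, b, this⟩
  · intro i
    obtain ⟨a, b, c, habc⟩ := key (Pi.single i 1)
    have hMe : Mlin (Pi.single i 1) = X i := by
      simp [Mlin, Pi.single_apply]
    have := congrArg Mlin habc
    rw [hMe] at this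
    simp only [map_add, map_smul, hM1, hM2, hML] at this
    exact ⟨c, a, b, by rw [this]; ring⟩

lemma homog_of_eq {q : MvPolynomial (Fin 3) ℝ} {m n : ℕ} (h : q.IsHomogeneous m)
    (e : m = n) : q.IsHomogeneous n := e ▸ h

lemma lemB (ℓ1 ℓ2 : MvPolynomial (Fin 3) ℝ)
    (h1 : ℓ1.IsHomogeneous 1) (h2 : ℓ2.IsHomogeneous 1)
    (a b : ℝ) (r b' c' : ℕ) (hbc : r ≤ b' + c') :
    ∃ u v : MvPolynomial (Fin 3) ℝ, u.IsHomogeneous (b' + c') ∧ v.IsHomogeneous (b' + c') ∧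
      (C a * ℓ1 + C b * ℓ2) ^ (r + 1) * (ℓ1 ^ b' * ℓ2 ^ c') =
        ℓ1 ^ (r + 1) * u + ℓ2 ^ (r + 1) * v := by
  set F : ℕ → MvPolynomial (Fin 3) ℝ :=
    fun i => C (a ^ i * b ^ (r + 1 - i) * ((r + 1).choose i : ℝ)) with hF
  have expand : (C a * ℓ1 + C b * ℓ2) ^ (r + 1) * (ℓ1 ^ b' * ℓ2 ^ c') =
      ∑ i ∈ range (r + 2), F i * (ℓ1 ^ (i + b') * ℓ2 ^ ((r + 1 - i) + c')) := by
    rw [add_pow, Finset.sum_mul]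
    apply Finset.sum_congr rfl
    intro i hi
    rw [hF]
    rw [pow_add, pow_add, mul_pow, mul_pow]
    simp only [C_mul, C_pow, MvPolynomial.C_eq_coe_nat]
    ring
  set u : MvPolynomial (Fin 3) ℝ :=
    ∑ i ∈ (range (r + 2)).filter (fun i => r + 1 ≤ i + b'),
      F i * (ℓ1 ^ (i + b' - (r + 1)) * ℓ2 ^ ((r + 1 - i) + c')) with hu
  set v : MvPolynomial (Fin 3) ℝ :=
    ∑ i ∈ (range (r + 2)).filter (fun i => ¬ (r + 1 ≤ i + b')),
      F i * (ℓ1 ^ (i + b') * ℓ2 ^ ((r + 1 - i) + c' - (r + 1))) with hv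
  refine ⟨u, v, ?_, ?_, ?_⟩
  · apply MvPolynomial.IsHomogeneous.sum
    intro i hi
    simp only [mem_filter, mem_range] at hi
    exact homog_of_eq
      (((isHomogeneous_C _ _).mul ((h1.pow _).mul (h2.pow _))))
      (by simp only [one_mul]; omega)
  · apply MvPolynomial.IsHomogeneous.sum
    intro i hi
    simp only [mem_filter, mem_range, not_le] at hi
    exact homog_of_eq
      (((isHomogeneous_C _ _).mul ((h1.pow _).mul (h2.pow _))))
      (by simp only [one_mul]; omega)
  · rw [expand, ← Finset.sum_filter_add_sum_filter_not (range (r + 2))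
      (fun i => r + 1 ≤ i + b')]
    congr 1
    · rw [hu, Finset.mul_sum]
      apply Finset.sum_congr rfl
      intro i hi
      simp only [mem_filter, mem_range] at hi
      conv_lhs => rw [show i + b' = (r + 1) + (i + b' - (r + 1)) by omega]
      rw [pow_add]
      ring
    · rw [hv, Finset.mul_sum]
      apply Finset.sum_congr rfl
      intro i hi
      simp only [mem_filter, mem_range, not_le] at hi
      conv_lhs => rw [show (r + 1 - i) + c' = (r + 1) + ((r + 1 - i) + c' - (r + 1)) by omega]
      rw [pow_add]
      ring

lemma degree3 (m : Fin 3 →₀ ℕ) : m.degree = m 0 + m 1 + m 2 := by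
  have : m.degree = ∑ i : Fin 3, m i :=
    Finset.sum_subset (Finset.subset_univ _)
      (fun i _ hi => Finsupp.notMem_support_iff.mp hi)
  rw [this, Fin.sum_univ_three]

lemma spanA (ℓ1 ℓ2 L : MvPolynomial (Fin 3) ℝ)
    (hX : ∀ i : Fin 3, ∃ a b c : ℝ, X i = a • L + b • ℓ1 + c • ℓ2)
    (n : ℕ) (g : MvPolynomial (Fin 3) ℝ) (hg : g.IsHomogeneous n) :
    g ∈ Submodule.span ℝ
      {q : MvPolynomial (Fin 3) ℝ | ∃ a b c : ℕ, a + b + c = n ∧ q = L ^ a * ℓ1 ^ b * ℓ2 ^ c} := by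
  set T : ℕ → Submodule ℝ (MvPolynomial (Fin 3) ℝ) := fun n => Submodule.span ℝ
      {q : MvPolynomial (Fin 3) ℝ | ∃ a b c : ℕ, a + b + c = n ∧ q = L ^ a * ℓ1 ^ b * ℓ2 ^ c}
    with hT
  have mulX : ∀ (n : ℕ) (i : Fin 3), ∀ q ∈ T n, X i * q ∈ T (n + 1) := by
    intro n i q hq
    induction hq using Submodule.span_induction with
    | mem q hmem =>
      obtain ⟨a, b, c, habc, rfl⟩ := hmem
      obtain ⟨x, y, z, hxyz⟩ := hX i
      rw [hxyz]
      have m1 : L ^ (a + 1) * ℓ1 ^ b * ℓ2 ^ c ∈ T (n + 1) :=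
        Submodule.subset_span ⟨a + 1, b, c, by omega, rfl⟩
      have m2 : L ^ a * ℓ1 ^ (b + 1) * ℓ2 ^ c ∈ T (n + 1) :=
        Submodule.subset_span ⟨a, b + 1, c, by omega, rfl⟩
      have m3 : L ^ a * ℓ1 ^ b * ℓ2 ^ (c + 1) ∈ T (n + 1) :=
        Submodule.subset_span ⟨a, b, c + 1, by omega, rfl⟩
      have : (x • L + y • ℓ1 + z • ℓ2) * (L ^ a * ℓ1 ^ b * ℓ2 ^ c) =
          x • (L ^ (a + 1) * ℓ1 ^ b * ℓ2 ^ c) + y • (L ^ a * ℓ1 ^ (b + 1) * ℓ2 ^ c)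
            + z • (L ^ a * ℓ1 ^ b * ℓ2 ^ (c + 1)) := by
        simp only [smul_eq_C_mul, pow_succ]
        ring
      rw [this]
      exact Submodule.add_mem _ (Submodule.add_mem _ (Submodule.smul_mem _ _ m1)
        (Submodule.smul_mem _ _ m2)) (Submodule.smul_mem _ _ m3)
    | zero => rw [mul_zero]; exact Submodule.zero_mem _
    | add q1 q2 _ _ hq1 hq2 => rw [mul_add]; exact Submodule.add_mem _ hq1 hq2
    | smul c q _ hq => rw [mul_smul_comm]; exact Submodule.smul_mem _ _ hq
  have mon_mem : ∀ (N : ℕ) (m : Fin 3 →₀ ℕ), m.degree = N → monomial m (1 : ℝ) ∈ T N := by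
    intro N
    induction N with
    | zero =>
      intro m hm
      rw [Finsupp.degree_eq_zero_iff] at hm
      subst hm
      have : monomial (0 : Fin 3 →₀ ℕ) (1 : ℝ) = L ^ 0 * ℓ1 ^ 0 * ℓ2 ^ 0 := by simp
      rw [this]
      exact Submodule.subset_span ⟨0, 0, 0, rfl, rfl⟩
    | succ N ih =>
      intro m hm
      have hne : m ≠ 0 := by
        intro h; rw [h, map_zero] at hm; omega
      obtain ⟨i, hi⟩ := Finsupp.support_nonempty_iff.mpr hne
      have hmi : 1 ≤ m i := Nat.one_le_iff_ne_zero.mpr (Finsupp.mem_support_iff.mp hi)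
      set m' : Fin 3 →₀ ℕ := m - Finsupp.single i 1 with hm'
      have hsplit : Finsupp.single i 1 + m' = m := by
        ext j
        simp only [Finsupp.add_apply, Finsupp.tsub_apply, Finsupp.single_apply, hm']
        by_cases h : i = j
        · subst h; simp; omega
        · simp [h]
      have hdeg' : m'.degree = N := by
        have h1 := degree3 m
        have h2 := degree3 m'
        have h3 : ∀ j, m' j = m j - Finsupp.single i 1 j := fun j => rfl
        have h4 := degree3 (Finsupp.single i 1)
        have hsa : ∀ j : Fin 3, (Finsupp.single i 1) j = if i = j then 1 else 0 := by
          intro j; simp [Finsupp.single_apply]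
        have e0 := h3 0; have e1 := h3 1; have e2 := h3 2
        rw [hsa] at e0 e1 e2
        fin_cases i <;> simp at e0 e1 e2 hmi ⊢ <;> omega
      rw [← hsplit, monomial_single_add, pow_one]
      exact mulX N i _ (ih m' hdeg')
  rw [← support_sum_monomial_coeff g]
  apply Submodule.sum_mem
  intro m hm
  have : monomial m (coeff m g) = (coeff m g) • monomial m (1 : ℝ) := by
    rw [smul_monomial]; norm_num
  rw [this]
  apply Submodule.smul_mem
  apply mon_mem
  rw [Finsupp.degree_eq_weight_one]
  exact hg (mem_support_iff.mp hm)

theorem stmt_11 (r : ℕ) (hr : 1 ≤ r)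
    (ℓ1 ℓ2 ℓ3 L : MvPolynomial (Fin 3) ℝ)
    (h1 : ℓ1.IsHomogeneous 1) (h2 : ℓ2.IsHomogeneous 1) (h3 : ℓ3.IsHomogeneous 1)
    (hL : L.IsHomogeneous 1)
    (h12 : LinearIndependent ℝ ![ℓ1, ℓ2])
    (h13 : LinearIndependent ℝ ![ℓ1, ℓ3])
    (h23 : LinearIndependent ℝ ![ℓ2, ℓ3])
    (p : Fin 3 → ℝ)
    (hp1 : eval p ℓ1 = 0) (hp2 : eval p ℓ2 = 0) (hp3 : eval p ℓ3 = 0)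
    (hpL : eval p L ≠ 0)
    (d : ℕ) (hd : r + 1 ≤ d)
    (g : MvPolynomial (Fin 3) ℝ) (hg : g.IsHomogeneous d) :
    ∃ u v w : MvPolynomial (Fin 3) ℝ,
      u.IsHomogeneous d ∧ v.IsHomogeneous d ∧ w.IsHomogeneous (r - 1) ∧
      ℓ3 ^ (r + 1) * g =
        ℓ1 ^ (r + 1) * u + ℓ2 ^ (r + 1) * v + L ^ (d - r + 1) * ℓ3 ^ (r + 1) * w := by
  obtain ⟨hker, hX⟩ := linalg ℓ1 ℓ2 L h1 h2 hL h12 p hp1 hp2 hpL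
  obtain ⟨a, b, hab⟩ := hker ℓ3 h3 hp3
  have hab' : ℓ3 = C a * ℓ1 + C b * ℓ2 := by
    rw [hab]; simp [smul_eq_C_mul]
  have hspan := spanA ℓ1 ℓ2 L hX d g hg
  clear hg
  induction hspan using Submodule.span_induction with
  | mem q hq =>
    obtain ⟨a', b', c', habc, rfl⟩ := hq
    by_cases hbc : r ≤ b' + c'
    · obtain ⟨u, v, hu, hv, heq⟩ := lemB ℓ1 ℓ2 h1 h2 a b r b' c' hbc
      refine ⟨L ^ a' * u, L ^ a' * v, 0, ?_, ?_, isHomogeneous_zero _ _ _, ?_⟩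
      · exact homog_of_eq ((hL.pow a').mul hu) (by omega)
      · exact homog_of_eq ((hL.pow a').mul hv) (by omega)
      · rw [hab']
        linear_combination (L ^ a') * heq
    · push_neg at hbc
      refine ⟨0, 0, L ^ (a' - (d - r + 1)) * ℓ1 ^ b' * ℓ2 ^ c',
        isHomogeneous_zero _ _ _, isHomogeneous_zero _ _ _, ?_, ?_⟩
      · exact homog_of_eq (((hL.pow _).mul (h1.pow _)).mul (h2.pow _)) (by omega)
      · have hsplit : a' = (d - r + 1) + (a' - (d - r + 1)) := by omega
        conv_lhs => rw [hsplit, pow_add]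
        ring
  | zero =>
    exact ⟨0, 0, 0, isHomogeneous_zero _ _ _, isHomogeneous_zero _ _ _,
      isHomogeneous_zero _ _ _, by simp⟩
  | add q1 q2 _ _ ih1 ih2 =>
    obtain ⟨u1, v1, w1, hu1, hv1, hw1, e1⟩ := ih1
    obtain ⟨u2, v2, w2, hu2, hv2, hw2, e2⟩ := ih2
    exact ⟨u1 + u2, v1 + v2, w1 + w2, hu1.add hu2, hv1.add hv2, hw1.add hw2,
      by linear_combination e1 + e2⟩
  | smul c q _ ih =>
    obtain ⟨u, v, w, hu, hv, hw, e⟩ := ih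
    refine ⟨C c * u, C c * v, C c * w,
      homog_of_eq ((isHomogeneous_C _ _).mul hu) (by omega),
      homog_of_eq ((isHomogeneous_C _ _).mul hv) (by omega),
      homog_of_eq ((isHomogeneous_C _ _).mul hw) (by omega), ?_⟩
    simp only [smul_eq_C_mul]
    linear_combination (C c) * e
end

section
/- Let a be a nonzero real number, let r ≥ 0 and d ≥ r + 1 be integers. For every homogeneous polynomial g ∈ ℝ[x,y,z] of degree d, there exist homogeneous polynomials u', v' of degree d and a homogeneous polynomial w' of degree 2r (each possibly zero) such that (x + a·y)^{r+1}·g = x^{r+1}·u' + y^{r+1}·v' + z^{d−r+1}·w'. -/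
/-!
Every monomial of degree `d + r + 1` in `x, y, z` is divisible by `x ^ (r + 1)`, by `y ^ (r + 1)`
or by `z ^ (d - r + 1)`, since otherwise its degree would be at most `r + r + (d - r) = d + r`.
Dividing the homogeneous polynomial `(x + a y) ^ (r + 1) g` successively by these three monomials
therefore leaves no remainder, and the quotients are homogeneous of the required degrees.
-/

open MvPolynomial

theorem Finsupp.exists_le_apply_of_sum_lt_degree_add_card {σ : Type*} [Fintype σ]
    (m : σ →₀ ℕ) (k : σ → ℕ) (h : ∑ i, k i < m.degree + Fintype.card σ) : ∃ i, k i ≤ m i := by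
  by_contra! hlt
  have : ∑ i, (m i + 1) ≤ ∑ i, k i := Finset.sum_le_sum fun i _ => hlt i
  rw [Finset.sum_add_distrib, ← Finsupp.degree_eq_sum] at this
  simp only [Finset.sum_const, Finset.card_univ, smul_eq_mul, mul_one] at this
  omega

namespace MvPolynomial

variable {σ R : Type*} [CommSemiring R] {p : MvPolynomial σ R} {n : ℕ}

theorem isHomogeneous_iff_degree_eq :
    p.IsHomogeneous n ↔ ∀ m ∈ p.support, m.degree = n := by
  simp [IsHomogeneous, IsWeightedHomogeneous, Finsupp.degree_eq_weight_one, Pi.one_def]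

theorem IsHomogeneous.degree_eq {m : σ →₀ ℕ} (hp : p.IsHomogeneous n) (hm : m ∈ p.support) :
    m.degree = n :=
  isHomogeneous_iff_degree_eq.mp hp m hm

theorem IsHomogeneous.eq_zero_of_forall_lt [Fintype σ] (hp : p.IsHomogeneous n) (k : σ → ℕ)
    (hk : ∑ i, k i < n + Fintype.card σ) (hlt : ∀ m ∈ p.support, ∀ i, m i < k i) : p = 0 := by
  by_contra hne
  obtain ⟨m, hm⟩ := support_nonempty.mpr hne
  obtain ⟨i, hi⟩ := m.exists_le_apply_of_sum_lt_degree_add_card k (hp.degree_eq hm ▸ hk)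
  exact (hlt m hm i).not_ge hi

theorem mem_support_modMonomial {s m : σ →₀ ℕ} :
    m ∈ (p.modMonomial s).support ↔ ¬s ≤ m ∧ m ∈ p.support := by
  by_cases h : s ≤ m
  · simp [h, coeff_modMonomial_of_le]
  · simp [h, coeff_modMonomial_of_not_le]

theorem IsHomogeneous.modMonomial (hp : p.IsHomogeneous n) (s : σ →₀ ℕ) :
    (p.modMonomial s).IsHomogeneous n :=
  isHomogeneous_iff_degree_eq.mpr fun _ hm => hp.degree_eq (mem_support_modMonomial.mp hm).2

theorem IsHomogeneous.divMonomial (hp : p.IsHomogeneous n) (s : σ →₀ ℕ) :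
    (p.divMonomial s).IsHomogeneous (n - s.degree) := by
  refine isHomogeneous_iff_degree_eq.mpr fun m hm => ?_
  rw [mem_support_iff, coeff_divMonomial] at hm
  have := hp.degree_eq (mem_support_iff.mpr hm)
  rw [map_add] at this
  omega

theorem IsHomogeneous.exists_eq_X_pow_mul_add_modMonomial (hp : p.IsHomogeneous n) (i : σ)
    (k : ℕ) : ∃ q : MvPolynomial σ R, q.IsHomogeneous (n - k) ∧
      p = X i ^ k * q + p.modMonomial (Finsupp.single i k) := by
  refine ⟨p.divMonomial (Finsupp.single i k), ?_, ?_⟩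
  · simpa using hp.divMonomial (Finsupp.single i k)
  · rw [X_pow_eq_monomial, divMonomial_add_modMonomial]

end MvPolynomial

theorem stmt_15_general (a : ℝ) (r d : ℕ) (hd : r + 1 ≤ d)
    (g : MvPolynomial (Fin 3) ℝ) (hg : g.IsHomogeneous d) :
    ∃ u' v' w' : MvPolynomial (Fin 3) ℝ,
      u'.IsHomogeneous d ∧ v'.IsHomogeneous d ∧ w'.IsHomogeneous (2 * r) ∧
      (X 0 + C a * X 1) ^ (r + 1) * g =
        X 0 ^ (r + 1) * u' + X 1 ^ (r + 1) * v' + X 2 ^ (d - r + 1) * w' := by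
  set P := (X 0 + C a * X 1) ^ (r + 1) * g
  have hP : P.IsHomogeneous (d + r + 1) := by
    have hlin := (isHomogeneous_X ℝ (0 : Fin 3)).add ((isHomogeneous_X ℝ 1).C_mul a)
    convert (hlin.pow (r + 1)).mul hg using 1
    ring
  set P₁ := P.modMonomial (Finsupp.single 2 (d - r + 1))
  set P₂ := P₁.modMonomial (Finsupp.single 0 (r + 1))
  have hP₁ : P₁.IsHomogeneous (d + r + 1) := hP.modMonomial _
  have hP₂ : P₂.IsHomogeneous (d + r + 1) := hP₁.modMonomial _
  obtain ⟨w', hw', hPw⟩ := hP.exists_eq_X_pow_mul_add_modMonomial 2 (d - r + 1)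
  obtain ⟨u', hu', hP₁u⟩ := hP₁.exists_eq_X_pow_mul_add_modMonomial 0 (r + 1)
  obtain ⟨v', hv', hP₂v⟩ := hP₂.exists_eq_X_pow_mul_add_modMonomial 1 (r + 1)
  have hP₃ : P₂.modMonomial (Finsupp.single 1 (r + 1)) = 0 := by
    refine (hP₂.modMonomial _).eq_zero_of_forall_lt ![r + 1, r + 1, d - r + 1]
      (by simp [Fin.sum_univ_three]; omega) fun m hm i => ?_
    simp only [P₂, P₁, mem_support_modMonomial, Finsupp.single_le_iff, not_le] at hm
    fin_cases i <;> dsimp <;> omega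
  refine ⟨u', v', w', ?_, ?_, ?_, ?_⟩
  · rwa [show d + r + 1 - (r + 1) = d by omega] at hu'
  · rwa [show d + r + 1 - (r + 1) = d by omega] at hv'
  · rwa [show d + r + 1 - (d - r + 1) = 2 * r by omega] at hw'
  · linear_combination hPw + hP₁u + hP₂v + hP₃

theorem stmt_15 (a : ℝ) (ha : a ≠ 0) (r d : ℕ) (hd : r + 1 ≤ d)
    (g : MvPolynomial (Fin 3) ℝ) (hg : g.IsHomogeneous d) :
    ∃ u' v' w' : MvPolynomial (Fin 3) ℝ,
      u'.IsHomogeneous d ∧ v'.IsHomogeneous d ∧ w'.IsHomogeneous (2 * r) ∧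
      (X 0 + C a * X 1) ^ (r + 1) * g =
        X 0 ^ (r + 1) * u' + X 1 ^ (r + 1) * v' + X 2 ^ (d - r + 1) * w' :=
  stmt_15_general a r d hd g hg
end
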